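/- arXiv:1402.0344 — 2 statements merged into one kernel-verified Lean document; each statement's English description precedes it below -/
import Mathlib

section
/- Let f be an odd positive integer, D a discriminant, and Q a primitive integral binary quadratic form of discriminant Df². Then there exist a primitive form q of discriminant D and a matrix U ∈ SL₂(ℤ) such that Q = q · (R_f U), where R_f = [[1,0],[0,f]]. -/
/-- An integral binary quadratic form ax² + bxy + cy². -/
structure BQF where
  a : ℤ
  b : ℤ
  c : ℤ

namespace BQF

/-- Value of the form at (x, y). -/
def eval (q : BQF) (x y : ℤ) : ℤ := q.a * x ^ 2 + q.b * x * y + q.c * y ^ 2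

/-- Discriminant b² - 4ac. -/
def disc (q : BQF) : ℤ := q.b ^ 2 - 4 * q.a * q.c

/-- A form is primitive if gcd(a, b, c) = 1. -/
def IsPrimitive (q : BQF) : Prop := Int.gcd (Int.gcd q.a q.b) q.c = 1

/-- Right action: (q·M)(x,y) = q(px + ry, sx + ty) for M = [[p,r],[s,t]]. -/
def act (q : BQF) (M : Matrix (Fin 2) (Fin 2) ℤ) : BQF :=
  ⟨q.eval (M 0 0) (M 1 0),
   q.eval (M 0 0 + M 0 1) (M 1 0 + M 1 1) - q.eval (M 0 0) (M 1 0) - q.eval (M 0 1) (M 1 1),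
   q.eval (M 0 1) (M 1 1)⟩

/-- Proper equivalence: equivalence under the SL₂(ℤ) action. -/
def ProperEquiv (q q' : BQF) : Prop :=
  ∃ U : Matrix.SpecialLinearGroup (Fin 2) ℤ, q.act U.1 = q'

end BQF

/-- R_g = [[f,g],[0,1]] for g < f, and R_f = [[1,0],[0,f]] when g = f. -/
def Rmat (f g : ℤ) : Matrix (Fin 2) (Fin 2) ℤ :=
  if g = f then !![1, 0; 0, f] else !![f, g; 0, 1]

/-- A discriminant: a non-square integer congruent to 0 or 1 mod 4. -/
def IsDiscriminant (D : ℤ) : Prop := ¬ IsSquare D ∧ (D % 4 = 0 ∨ D % 4 = 1)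

/-- A fundamental discriminant. -/
def IsFundamental (D : ℤ) : Prop :=
  (D % 4 = 1 ∧ Squarefree D) ∨
  (D % 4 = 0 ∧ Squarefree (D / 4) ∧ (D / 4 % 4 = 2 ∨ D / 4 % 4 = 3))

/-!
Pick a value `Q(x, 1)` coprime to `f` (for each odd prime `p` one of `Q(0,1), Q(±1,1)` is
prime to `p`, and the Chinese remainder theorem glues these choices), and move it into the
leading coefficient `A` with an element of `SL₂(ℤ)`. As `2A` is invertible mod `f`, a shear
`[[1, t], [0, 1]]` makes the middle coefficient `B` divisible by `f`. Then
`f² ∣ B² - 4AC` forces `f² ∣ 4AC`, hence `f² ∣ C`, and the resulting form is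
`(A, B/f, C/f²)·R_f`.
-/

open Matrix ModularGroup
open scoped MatrixGroups

namespace BQF

theorem act_mul (q : BQF) (M N : Matrix (Fin 2) (Fin 2) ℤ) :
    (q.act M).act N = q.act (M * N) := by
  simp only [act, eval, Matrix.mul_apply, Fin.sum_univ_two, BQF.mk.injEq]
  refine ⟨by ring, by ring, by ring⟩

theorem act_one (q : BQF) : q.act 1 = q := by
  simp only [act, eval, one_apply_eq, one_apply_ne zero_ne_one, one_apply_ne one_ne_zero]
  ring_nf

theorem disc_act (q : BQF) (M : Matrix (Fin 2) (Fin 2) ℤ) :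
    (q.act M).disc = q.disc * M.det ^ 2 := by
  simp only [act, eval, disc, det_fin_two]
  ring

theorem act_T_zpow (q : BQF) (t : ℤ) :
    q.act (T ^ t).1 = ⟨q.a, q.b + 2 * q.a * t, q.eval t 1⟩ := by
  simp only [coe_T_zpow, act, eval, BQF.mk.injEq, of_apply, cons_val', cons_val_zero,
    cons_val_one, empty_val', cons_val_fin_one, and_true]
  exact ⟨by ring, by ring⟩

theorem act_S (q : BQF) : q.act S.1 = ⟨q.c, -q.b, q.a⟩ := by
  simp only [coe_S, act, eval, BQF.mk.injEq, of_apply, cons_val', cons_val_zero,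
    cons_val_one, empty_val', cons_val_fin_one]
  refine ⟨by ring, by ring, by ring⟩

theorem act_diag_one (q : BQF) (f : ℤ) :
    q.act !![1, 0; 0, f] = ⟨q.a, q.b * f, q.c * f ^ 2⟩ := by
  simp only [act, eval, BQF.mk.injEq, of_apply, cons_val', cons_val_zero,
    cons_val_one, empty_val', cons_val_fin_one]
  refine ⟨by ring, by ring, by ring⟩

theorem dvd_eval {q : BQF} {d : ℤ} (ha : d ∣ q.a) (hb : d ∣ q.b) (hc : d ∣ q.c) (x y : ℤ) :
    d ∣ q.eval x y := by
  unfold eval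
  exact dvd_add (dvd_add (ha.mul_right _) ((hb.mul_right x).mul_right y)) (hc.mul_right _)

theorem dvd_act {q : BQF} {d : ℤ} (ha : d ∣ q.a) (hb : d ∣ q.b) (hc : d ∣ q.c)
    (M : Matrix (Fin 2) (Fin 2) ℤ) :
    d ∣ (q.act M).a ∧ d ∣ (q.act M).b ∧ d ∣ (q.act M).c :=
  ⟨dvd_eval ha hb hc _ _,
    dvd_sub (dvd_sub (dvd_eval ha hb hc _ _) (dvd_eval ha hb hc _ _)) (dvd_eval ha hb hc _ _),
    dvd_eval ha hb hc _ _⟩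

theorem isPrimitive_iff {q : BQF} :
    q.IsPrimitive ↔ ∀ d : ℤ, d ∣ q.a → d ∣ q.b → d ∣ q.c → IsUnit d := by
  refine ⟨fun h d ha hb hc => ?_, fun h => ?_⟩
  · have hd := Int.dvd_coe_gcd (Int.dvd_coe_gcd ha hb) hc
    rw [h, Nat.cast_one] at hd
    exact isUnit_of_dvd_one hd
  · have hg := h _ ((Int.gcd_dvd_left _ _).trans (Int.gcd_dvd_left _ _))
      ((Int.gcd_dvd_left _ _).trans (Int.gcd_dvd_right _ _)) (Int.gcd_dvd_right _ _)
    simpa [IsPrimitive, Int.isUnit_iff_natAbs_eq] using hg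

theorem IsPrimitive.of_act {q : BQF} {M : Matrix (Fin 2) (Fin 2) ℤ}
    (h : (q.act M).IsPrimitive) : q.IsPrimitive :=
  isPrimitive_iff.2 fun _ ha hb hc =>
    let ⟨ha', hb', hc'⟩ := dvd_act ha hb hc M
    isPrimitive_iff.1 h _ ha' hb' hc'

theorem eval_add_mul_one (q : BQF) (x m k : ℤ) :
    q.eval (x + m * k) 1 = q.eval x 1 + m * (k * (q.a * (2 * x + m * k) + q.b)) := by
  unfold eval; ring

theorem exists_not_dvd_eval_one {q : BQF} (hq : q.IsPrimitive) {p : ℤ} (hp : Prime p)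
    (hodd : Odd p) : ∃ x, ¬ p ∣ q.eval x 1 := by
  by_contra! h
  have h2p : IsCoprime p 2 := Int.isCoprime_two_right.2 hodd
  have hc : p ∣ q.c := by simpa [BQF.eval] using h 0
  have h2a : p ∣ 2 * q.a := by
    have e : 2 * q.a = q.eval 1 1 + q.eval (-1) 1 - 2 * q.eval 0 1 := by
      simp only [BQF.eval]; ring
    rw [e]
    exact dvd_sub (dvd_add (h 1) (h (-1))) (dvd_mul_of_dvd_right (h 0) 2)
  have h2b : p ∣ 2 * q.b := by
    have e : 2 * q.b = q.eval 1 1 - q.eval (-1) 1 := by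
      simp only [BQF.eval]; ring
    rw [e]
    exact dvd_sub (h 1) (h (-1))
  exact hp.not_isUnit (isPrimitive_iff.1 hq p (h2p.dvd_of_dvd_mul_left h2a)
    (h2p.dvd_of_dvd_mul_left h2b) hc)

theorem exists_isCoprime_eval_one_mul {q : BQF} {m n x₁ x₂ : ℤ} (hmn : IsCoprime m n)
    (h₁ : IsCoprime (q.eval x₁ 1) m) (h₂ : IsCoprime (q.eval x₂ 1) n) :
    ∃ x, IsCoprime (q.eval x 1) (m * n) := by
  obtain ⟨u, v, huv⟩ := hmn
  refine ⟨x₁ + m * (u * (x₂ - x₁)), IsCoprime.mul_right ?_ ?_⟩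
  · rw [eval_add_mul_one]
    exact h₁.add_mul_left_left _
  · have hx : x₁ + m * (u * (x₂ - x₁)) = x₂ + n * (v * (x₁ - x₂)) := by
      linear_combination (x₂ - x₁) * huv
    rw [hx, eval_add_mul_one]
    exact h₂.add_mul_left_left _

theorem exists_isCoprime_eval_one_nat {q : BQF} (hq : q.IsPrimitive) (n : ℕ) (hn : Odd n) :
    ∃ x, IsCoprime (q.eval x 1) n := by
  induction n using Nat.recOnPrimeCoprime with
  | zero => exact absurd hn (by decide)
  | prime_pow p k hp =>
    rcases eq_or_ne k 0 with rfl | hk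
    · exact ⟨0, by simpa using isCoprime_one_right⟩
    have hpodd : Odd (p : ℤ) := by
      exact_mod_cast (Nat.odd_pow_iff hk).1 hn
    obtain ⟨x, hx⟩ := exists_not_dvd_eval_one hq (Nat.prime_iff_prime_int.1 hp) hpodd
    refine ⟨x, ?_⟩
    push_cast
    exact ((Nat.prime_iff_prime_int.1 hp).coprime_iff_not_dvd.2 hx).symm.pow_right
  | coprime a b _ _ hab iha ihb =>
    obtain ⟨x₁, h₁⟩ := iha (Nat.odd_mul.1 hn).1
    obtain ⟨x₂, h₂⟩ := ihb (Nat.odd_mul.1 hn).2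
    push_cast
    exact exists_isCoprime_eval_one_mul (Nat.isCoprime_iff_coprime.2 hab) h₁ h₂

theorem exists_isCoprime_eval_one {q : BQF} (hq : q.IsPrimitive) {n : ℤ} (hn : Odd n) :
    ∃ x, IsCoprime (q.eval x 1) n := by
  obtain ⟨x, hx⟩ := exists_isCoprime_eval_one_nat hq n.natAbs (Int.natAbs_odd.2 hn)
  exact ⟨x, by simpa [Int.isCoprime_iff_nat_coprime, Int.natCast_natAbs, Int.natAbs_abs] using hx⟩

theorem disc_act_SL (q : BQF) (U : SL(2, ℤ)) : (q.act U.1).disc = q.disc := by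
  rw [disc_act, Matrix.SpecialLinearGroup.det_coe, one_pow, mul_one]

theorem exists_isCoprime_act_a {q : BQF} (hq : q.IsPrimitive) {n : ℤ} (hn : Odd n) :
    ∃ U : SL(2, ℤ), IsCoprime (q.act U.1).a n := by
  obtain ⟨x, hx⟩ := exists_isCoprime_eval_one hq hn
  refine ⟨T ^ x * S, ?_⟩
  rwa [Matrix.SpecialLinearGroup.coe_mul, ← act_mul, act_T_zpow, act_S]

theorem exists_dvd_act_T_zpow_b {q : BQF} {f : ℤ} (ha : IsCoprime q.a f) (hf : Odd f) :
    ∃ t : ℤ, f ∣ (q.act (T ^ t).1).b := by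
  obtain ⟨u, v, huv⟩ := (Int.isCoprime_two_left.2 hf).mul_left ha
  -- `u` inverts `2a` modulo `f`, so `t = -bu` makes `b + 2at ≡ 0`.
  refine ⟨-(q.b * u), v * q.b, ?_⟩
  rw [act_T_zpow]
  linear_combination (-q.b) * huv

theorem sq_dvd_c {q : BQF} {f : ℤ} (ha : IsCoprime q.a f) (hf : Odd f) (hb : f ∣ q.b)
    (hdisc : f ^ 2 ∣ q.disc) : f ^ 2 ∣ q.c := by
  have h4a : IsCoprime (f ^ 2) (2 ^ 2 * q.a) :=
    ((Int.isCoprime_two_left.2 hf).pow_left.mul_left ha).pow_right.symm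
  refine h4a.dvd_of_dvd_mul_left ?_
  have e : 2 ^ 2 * q.a * q.c = q.b ^ 2 - q.disc := by rw [disc]; ring
  rw [e]
  exact dvd_sub (pow_dvd_pow_of_dvd hb 2) hdisc

theorem exists_eq_act_diag_one {q : BQF} {f : ℤ} (hb : f ∣ q.b) (hc : f ^ 2 ∣ q.c) :
    ∃ q' : BQF, q = q'.act !![1, 0; 0, f] := by
  obtain ⟨a, _, _⟩ := q
  obtain ⟨b, rfl⟩ := hb
  obtain ⟨c, rfl⟩ := hc
  exact ⟨⟨a, b, c⟩, by rw [act_diag_one, mul_comm b, mul_comm c]⟩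

theorem exists_act_eq_act_diag_one {Q : BQF} (hQ : Q.IsPrimitive) {f : ℤ} (hf : Odd f)
    (hdisc : f ^ 2 ∣ Q.disc) :
    ∃ (q : BQF) (W : SL(2, ℤ)), Q.act W.1 = q.act !![1, 0; 0, f] := by
  obtain ⟨U, hU⟩ := exists_isCoprime_act_a hQ hf
  obtain ⟨t, ht⟩ := exists_dvd_act_T_zpow_b hU hf
  have ha : IsCoprime ((Q.act U.1).act (T ^ t).1).a f := by rwa [act_T_zpow]
  have hdisc' : f ^ 2 ∣ ((Q.act U.1).act (T ^ t).1).disc := by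
    rwa [disc_act_SL, disc_act_SL]
  obtain ⟨q, hq⟩ := exists_eq_act_diag_one ht (sq_dvd_c ha hf ht hdisc')
  exact ⟨q, U * T ^ t, by rw [Matrix.SpecialLinearGroup.coe_mul, ← act_mul, hq]⟩

end BQF

theorem stmt9_general (f : ℤ) (hodd : Odd f) (D : ℤ) (Q : BQF) (hQ : Q.IsPrimitive)
    (hQd : Q.disc = D * f ^ 2) :
    ∃ q : BQF, ∃ U : Matrix.SpecialLinearGroup (Fin 2) ℤ,
      q.IsPrimitive ∧ q.disc = D ∧ Q = q.act (Rmat f f * U.1) := by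
  obtain ⟨q, W, hW⟩ := BQF.exists_act_eq_act_diag_one hQ hodd (hQd ▸ dvd_mul_left _ _)
  have hR : Rmat f f = !![1, 0; 0, f] := if_pos rfl
  have hQq : Q = q.act (Rmat f f * (W⁻¹ : SL(2, ℤ)).1) := by
    rw [hR, ← BQF.act_mul, ← hW, BQF.act_mul, ← Matrix.SpecialLinearGroup.coe_mul, mul_inv_cancel,
      Matrix.SpecialLinearGroup.coe_one, BQF.act_one]
  refine ⟨q, W⁻¹, ?_, ?_, hQq⟩
  · rw [hQq] at hQ
    exact hQ.of_act
  · have h := BQF.disc_act q (Rmat f f * (W⁻¹ : SL(2, ℤ)).1)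
    rw [← hQq, hQd, det_mul, Matrix.SpecialLinearGroup.det_coe, mul_one, hR, det_fin_two_of] at h
    have hf : f ^ 2 ≠ 0 := pow_ne_zero 2 (by rintro rfl; exact Int.not_odd_zero hodd)
    exact (mul_right_cancel₀ hf (by simpa using h)).symm

theorem stmt9 (f : ℤ) (hf : 0 < f) (hodd : Odd f) (D : ℤ)
    (hD : IsDiscriminant D) (Q : BQF) (hQ : Q.IsPrimitive) (hQd : Q.disc = D * f ^ 2) :
    ∃ q : BQF, ∃ U : Matrix.SpecialLinearGroup (Fin 2) ℤ,
      q.IsPrimitive ∧ q.disc = D ∧ Q = q.act (Rmat f f * U.1) :=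
  stmt9_general f hodd D Q hQ hQd
end

section
/- Let f be a prime and D a discriminant. If two primitive forms Q₁, Q₂ of discriminant Df² are semi-equivalent, then there exist a single primitive form q of discriminant D, integers 0 ≤ g₁, g₂ ≤ f, and U₁, U₂ ∈ SL₂(ℤ) with Qᵢ = q · R_{gᵢ} · Uᵢ for i = 1, 2. -/
/-- Semi-equivalence of forms of discriminant Df². -/
def SemiEquiv (f D : ℤ) (Q₁ Q₂ : BQF) : Prop :=
  ∃ q₁ q₂ : BQF, ∃ g₁ g₂ : ℤ, ∃ U₁ U₂ : Matrix.SpecialLinearGroup (Fin 2) ℤ,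
    q₁.IsPrimitive ∧ q₂.IsPrimitive ∧ q₁.disc = D ∧ q₂.disc = D ∧
    BQF.ProperEquiv q₁ q₂ ∧ 0 ≤ g₁ ∧ g₁ ≤ f ∧ 0 ≤ g₂ ∧ g₂ ≤ f ∧
    Q₁ = q₁.act (Rmat f g₁ * U₁.1) ∧ Q₂ = q₂.act (Rmat f g₂ * U₂.1)


/-! A matrix of prime determinant `p` has a Hermite normal form `R_g · U` with `0 ≤ g ≤ p` and
`U ∈ SL₂(ℤ)`. So if `Q₂ = q₂·R_{g₂}·U₂` with `q₂ = q₁·V`, then rewriting `V·R_{g₂} = R_g·U`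
expresses `Q₂ = q₁·R_g·(U·U₂)` through the same form `q₁` as `Q₁`. -/

open Matrix

theorem BQF.act_mul_s12 (q : BQF) (M N : Matrix (Fin 2) (Fin 2) ℤ) :
    q.act (M * N) = (q.act M).act N := by
  simp only [BQF.act, BQF.eval, Matrix.mul_apply, Fin.sum_univ_two, BQF.mk.injEq]
  refine ⟨?_, ?_, ?_⟩ <;> ring

theorem det_Rmat (f g : ℤ) : (Rmat f g).det = f := by
  unfold Rmat
  split_ifs <;> simp [det_fin_two_of]

/-- The bottom row of `M` is primitive: complete it to `U ∈ SL₂(ℤ)`, then reduce the top-right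
entry of `M U⁻¹ = [[f, g], [0, 1]]` modulo `f`. -/
theorem exists_Rmat_mul_of_isCoprime {f : ℤ} (hf : 0 < f) (M : Matrix (Fin 2) (Fin 2) ℤ)
    (hdet : M.det = f) (hcop : IsCoprime (M 1 0) (M 1 1)) :
    ∃ g : ℤ, ∃ U : SpecialLinearGroup (Fin 2) ℤ, 0 ≤ g ∧ g < f ∧ M = Rmat f g * U.1 := by
  rw [det_fin_two] at hdet
  obtain ⟨u, v, huv⟩ := hcop
  obtain ⟨k, g, hdiv, hg0, hgf⟩ : ∃ k g, f * k + g = M 0 0 * u + M 0 1 * v ∧ 0 ≤ g ∧ g < f :=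
    ⟨_, _, Int.mul_ediv_add_emod _ _, Int.emod_nonneg _ hf.ne', Int.emod_lt_of_pos _ hf⟩
  have hU : (v + k * M 1 0) * M 1 1 - (k * M 1 1 - u) * M 1 0 = 1 := by
    linear_combination huv
  refine ⟨g, ⟨!![v + k * M 1 0, k * M 1 1 - u; M 1 0, M 1 1], by simpa [det_fin_two_of] using hU⟩,
    hg0, hgf, ?_⟩
  rw [Rmat, if_neg hgf.ne]
  ext i j
  fin_cases i <;> fin_cases j <;> simp [Matrix.mul_apply]
  · linear_combination (-M 0 0) * huv + v * hdet - M 1 0 * hdiv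
  · linear_combination (-M 0 1) * huv - u * hdet - M 1 1 * hdiv

theorem exists_Rmat_self_mul_of_dvd {f : ℤ} (hf : f ≠ 0) (M : Matrix (Fin 2) (Fin 2) ℤ)
    (hdet : M.det = f) (hc : f ∣ M 1 0) (hd : f ∣ M 1 1) :
    ∃ U : SpecialLinearGroup (Fin 2) ℤ, M = Rmat f f * U.1 := by
  rw [det_fin_two] at hdet
  obtain ⟨c, hc⟩ := hc
  obtain ⟨d, hd⟩ := hd
  have hU : M 0 0 * d - M 0 1 * c = 1 :=
    mul_left_cancel₀ hf (by linear_combination hdet - M 0 0 * hd + M 0 1 * hc)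
  refine ⟨⟨!![M 0 0, M 0 1; c, d], by simpa [det_fin_two_of] using hU⟩, ?_⟩
  rw [Rmat, if_pos rfl]
  ext i j
  fin_cases i <;> fin_cases j <;> simp [Matrix.mul_apply, hc, hd]

theorem exists_Rmat_mul_of_det_prime {p : ℕ} (hp : p.Prime) (M : Matrix (Fin 2) (Fin 2) ℤ)
    (hdet : M.det = p) :
    ∃ g : ℤ, ∃ U : SpecialLinearGroup (Fin 2) ℤ, 0 ≤ g ∧ g ≤ p ∧ M = Rmat p g * U.1 := by
  have hgcd : Int.gcd (M 1 0) (M 1 1) ∣ p := by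
    rw [← Int.natCast_dvd_natCast, ← hdet, det_fin_two]
    exact dvd_sub (dvd_mul_of_dvd_right (Int.gcd_dvd_right _ _) _)
      (dvd_mul_of_dvd_right (Int.gcd_dvd_left _ _) _)
  rcases (Nat.dvd_prime hp).mp hgcd with hone | hself
  · obtain ⟨g, U, hg0, hgp, hM⟩ := exists_Rmat_mul_of_isCoprime (by exact_mod_cast hp.pos) M
      hdet (Int.isCoprime_iff_gcd_eq_one.mpr hone)
    exact ⟨g, U, hg0, hgp.le, hM⟩
  · obtain ⟨U, hM⟩ := exists_Rmat_self_mul_of_dvd (by exact_mod_cast hp.ne_zero) M hdet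
      (hself ▸ Int.gcd_dvd_left _ _) (hself ▸ Int.gcd_dvd_right _ _)
    exact ⟨p, U, by positivity, le_rfl, hM⟩

theorem stmt12_general (f : ℕ) (hf : f.Prime) (D : ℤ)
    (Q₁ Q₂ : BQF)
    (hse : SemiEquiv f D Q₁ Q₂) :
    ∃ q : BQF, ∃ g₁ g₂ : ℤ, ∃ U₁ U₂ : Matrix.SpecialLinearGroup (Fin 2) ℤ,
      q.IsPrimitive ∧ q.disc = D ∧ 0 ≤ g₁ ∧ g₁ ≤ f ∧ 0 ≤ g₂ ∧ g₂ ≤ f ∧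
      Q₁ = q.act (Rmat f g₁ * U₁.1) ∧ Q₂ = q.act (Rmat f g₂ * U₂.1) := by
  obtain ⟨q₁, q₂, g₁, g₂, U₁, U₂, hq₁, -, hD₁, -, ⟨V, rfl⟩, hg₁0, hg₁f, -, -, hQ₁, hQ₂⟩ := hse
  obtain ⟨g, U, hg0, hgf, hVR⟩ := exists_Rmat_mul_of_det_prime hf (V.1 * Rmat f g₂)
    (by rw [det_mul, V.2, one_mul, det_Rmat])
  refine ⟨q₁, g₁, g, U₁, U * U₂, hq₁, hD₁, hg₁0, hg₁f, hg0, hgf, hQ₁, ?_⟩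
  rw [hQ₂, ← BQF.act_mul_s12, ← mul_assoc, hVR, mul_assoc]
  rfl

theorem stmt12 (f : ℕ) (hf : f.Prime) (D : ℤ)
    (hD : IsDiscriminant D) (Q₁ Q₂ : BQF) (h₁ : Q₁.IsPrimitive) (h₂ : Q₂.IsPrimitive)
    (hd₁ : Q₁.disc = D * f ^ 2) (hd₂ : Q₂.disc = D * f ^ 2)
    (hse : SemiEquiv f D Q₁ Q₂) :
    ∃ q : BQF, ∃ g₁ g₂ : ℤ, ∃ U₁ U₂ : Matrix.SpecialLinearGroup (Fin 2) ℤ,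
      q.IsPrimitive ∧ q.disc = D ∧ 0 ≤ g₁ ∧ g₁ ≤ f ∧ 0 ≤ g₂ ∧ g₂ ≤ f ∧
      Q₁ = q.act (Rmat f g₁ * U₁.1) ∧ Q₂ = q.act (Rmat f g₂ * U₂.1) :=
  stmt12_general f hf D Q₁ Q₂ hse
end
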